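/- arXiv:2405.17544 — 3 statements merged into one kernel-verified Lean document; each statement's English description precedes it below -/
import Mathlib

section
/- Let G = (V,E) be a finite simple graph, S ⊆ V nonempty, and for y ∈ S let N̂_S(y) = |{y' ∈ S : y' = y or (y',y) ∉ E}| ≥ 1. Define g(S) = (1/|V|) Σ_{y∈S} 1/N̂_S(y). Suppose max_{y∈S} N̂_S(y) > 1 and let y* ∈ S achieve this maximum. Then g(S \ {y*}) ≥ g(S). -/
open Finset

/-- `Nhat G S y` is the number of vertices of `S` that are not adjacent to `y`
(counting `y` itself). -/
def Nhat {V : Type*} [DecidableEq V] (G : SimpleGraph V) [DecidableRel G.Adj]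
    (S : Finset V) (y : V) : ℕ :=
  (S.filter fun y' => y' = y ∨ ¬ G.Adj y' y).card

/-- `g G S = (1/|V|) Σ_{y ∈ S} 1 / N̂_S(y)`. -/
noncomputable def g {V : Type*} [Fintype V] [DecidableEq V] (G : SimpleGraph V)
    [DecidableRel G.Adj] (S : Finset V) : ℝ :=
  (1 / (Fintype.card V : ℝ)) * ∑ y ∈ S, 1 / (Nhat G S y : ℝ)

/-!
Write `M = N̂_S(y*)` and let `T` be the `M - 1` non-neighbours of `y*` in `S \ {y*}`.
Removing `y*` loses the term `1/M` and lowers `N̂(y)` by one exactly for `y ∈ T`, where the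
gain `1/(N̂(y) - 1) - 1/N̂(y) = 1/(N̂(y)(N̂(y) - 1))` is at least `1/(M(M - 1))` because
`N̂(y) ≤ M`. Summed over `T` the gains are at least `(M - 1) / (M(M - 1)) = 1/M`.
-/

theorem inv_sub_inv_add_one_le_of_le {a b : ℝ} (ha : 0 < a) (hab : a ≤ b) :
    b⁻¹ - (b + 1)⁻¹ ≤ a⁻¹ - (a + 1)⁻¹ := by
  have hb : 0 < b := ha.trans_le hab
  have key : ∀ t : ℝ, 0 < t → t⁻¹ - (t + 1)⁻¹ = (t * (t + 1))⁻¹ := by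
    intro t ht
    field_simp
    ring
  rw [key a ha, key b hb]
  gcongr

theorem inv_card_add_one_le_sum_inv_sub_inv_add_one {ι : Type*} (T : Finset ι)
    (hT : T.Nonempty) (a : ι → ℝ) (ha : ∀ i ∈ T, 0 < a i ∧ a i ≤ #T) :
    ((#T : ℝ) + 1)⁻¹ ≤ ∑ i ∈ T, ((a i)⁻¹ - (a i + 1)⁻¹) := by
  have hm : (0 : ℝ) < #T := by exact_mod_cast hT.card_pos
  calc ((#T : ℝ) + 1)⁻¹ = #T • ((#T : ℝ)⁻¹ - ((#T : ℝ) + 1)⁻¹) := by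
        rw [nsmul_eq_mul]
        field_simp
        ring
    _ ≤ ∑ i ∈ T, ((a i)⁻¹ - (a i + 1)⁻¹) :=
        card_nsmul_le_sum _ _ _ fun i hi =>
          inv_sub_inv_add_one_le_of_le (ha i hi).1 (ha i hi).2

section Nhat

variable {V : Type*} [DecidableEq V] (G : SimpleGraph V) [DecidableRel G.Adj]
  {S : Finset V} {x y : V}

theorem Nhat_pos (hy : y ∈ S) : 0 < Nhat G S y :=
  card_pos.mpr ⟨y, mem_filter.mpr ⟨hy, Or.inl rfl⟩⟩

theorem Nhat_erase_of_adj (h : G.Adj x y) : Nhat G (S.erase x) y = Nhat G S y := by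
  unfold Nhat
  rw [filter_erase, erase_eq_of_notMem]
  simp [h, h.ne]

theorem Nhat_erase_add_one (hx : x ∈ S) (h : ¬ G.Adj x y) :
    Nhat G (S.erase x) y + 1 = Nhat G S y := by
  unfold Nhat
  rw [filter_erase, card_erase_add_one]
  simp [hx, h]

theorem card_filter_not_adj_erase_add_one (hx : x ∈ S) :
    #((S.erase x).filter fun y => ¬ G.Adj x y) + 1 = Nhat G S x := by
  have hT : ((S.erase x).filter fun y => ¬ G.Adj x y) =
      (S.filter fun y => y = x ∨ ¬ G.Adj y x).erase x := by
    ext y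
    simp only [mem_filter, mem_erase, G.adj_comm x y]
    tauto
  rw [hT, card_erase_add_one (mem_filter.mpr ⟨hx, Or.inl rfl⟩)]
  rfl

theorem sum_inv_Nhat_le_sum_inv_Nhat_erase (hx : x ∈ S) (hgt : 1 < Nhat G S x)
    (hmax : ∀ y ∈ S, Nhat G S y ≤ Nhat G S x) :
    ∑ y ∈ S, (Nhat G S y : ℝ)⁻¹ ≤ ∑ y ∈ S.erase x, (Nhat G (S.erase x) y : ℝ)⁻¹ := by
  set T := (S.erase x).filter fun y => ¬ G.Adj x y
  have hT : #T + 1 = Nhat G S x := card_filter_not_adj_erase_add_one G hx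
  have hT_nonempty : T.Nonempty := card_pos.mp (by omega)
  have hT_erase : ∀ y ∈ T, Nhat G (S.erase x) y + 1 = Nhat G S y := fun y hy =>
    Nhat_erase_add_one G hx (mem_filter.mp hy).2
  have hadj : ∑ y ∈ (S.erase x).filter (fun y => ¬¬ G.Adj x y), (Nhat G (S.erase x) y : ℝ)⁻¹ =
      ∑ y ∈ (S.erase x).filter (fun y => ¬¬ G.Adj x y), (Nhat G S y : ℝ)⁻¹ :=
    sum_congr rfl fun y hy => by rw [Nhat_erase_of_adj G (not_not.mp (mem_filter.mp hy).2)]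
  have hgain : ((#T : ℝ) + 1)⁻¹ ≤
      ∑ y ∈ T, ((Nhat G (S.erase x) y : ℝ)⁻¹ - (Nhat G S y : ℝ)⁻¹) := by
    have := inv_card_add_one_le_sum_inv_sub_inv_add_one T hT_nonempty
      (fun y => (Nhat G (S.erase x) y : ℝ)) fun y hy => by
        have hyS := (mem_filter.mp hy).1
        refine ⟨by exact_mod_cast Nhat_pos G hyS, ?_⟩
        have hle := hmax y (mem_of_mem_erase hyS)
        have hsucc := hT_erase y hy
        exact_mod_cast (by omega : Nhat G (S.erase x) y ≤ #T)
    convert this using 3 with y hy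
    rw [← hT_erase y hy]
    push_cast
    rfl
  have hM : (Nhat G S x : ℝ) = #T + 1 := by exact_mod_cast hT.symm
  rw [← sum_erase_add S _ hx, ← sum_filter_not_add_sum_filter (S.erase x) (fun y => ¬ G.Adj x y),
    ← sum_filter_not_add_sum_filter (S.erase x) (fun y => ¬ G.Adj x y), hadj, hM]
  rw [sum_sub_distrib] at hgain
  linarith

end Nhat

theorem stmt_5_general {V : Type*} [Fintype V] [DecidableEq V] (G : SimpleGraph V)
    [DecidableRel G.Adj] (S : Finset V)
    (ystar : V) (hy : ystar ∈ S) (hgt : 1 < Nhat G S ystar)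
    (hmax : ∀ y ∈ S, Nhat G S y ≤ Nhat G S ystar) :
    g G S ≤ g G (S.erase ystar) := by
  unfold g
  simp only [one_div]
  exact mul_le_mul_of_nonneg_left (sum_inv_Nhat_le_sum_inv_Nhat_erase G hy hgt hmax)
    (by positivity)

/-- Removing from `S` a vertex `y*` maximizing `N̂_S`, when `N̂_S(y*) > 1`,
does not decrease `g`. -/
theorem stmt_5 {V : Type*} [Fintype V] [DecidableEq V] (G : SimpleGraph V)
    [DecidableRel G.Adj] (S : Finset V) (hS : S.Nonempty)
    (ystar : V) (hy : ystar ∈ S) (hgt : 1 < Nhat G S ystar)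
    (hmax : ∀ y ∈ S, Nhat G S y ≤ Nhat G S ystar) :
    g G S ≤ g G (S.erase ystar) :=
  stmt_5_general G S ystar hy hgt hmax
end

section
/- Let G = (V,E) be a finite simple graph and define g(S) = (1/|V|) Σ_{y∈S} 1/N̂_S(y) for nonempty S ⊆ V, where N̂_S(y) = |{y' ∈ S : y' = y or (y',y) ∉ E}|. If there exists a nonempty S ⊆ V with g(S) ≥ k/|V| for an integer k ≥ 1, then G contains a clique of size at least k. -/
open Finset

/-!
Removing a vertex `b` of maximal `N̂_S(b) = m ≥ 2` loses `1 / m` from `Σ_{y ∈ S} 1 / N̂_S(y)`,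
but each of the `m - 1` other non-neighbours `y` of `b` has `N̂(y)` drop from some `n ≤ m` to
`n - 1`, gaining `1 / (n (n - 1)) ≥ 1 / (m (m - 1))`; so the sum does not decrease. Repeating
until every `N̂_S(y) ≤ 1`, i.e. until `S` is a clique, where the sum is at most `|S|`, turns
`g(S) ≥ k / |V|` into a clique of size at least `k`.
-/

lemma one_div_mul_le_one_div_sub_one_div {x c : ℝ} (hx : 0 < x) (hxc : x ≤ c) :
    1 / ((c + 1) * c) ≤ 1 / x - 1 / (x + 1) := by
  have hsub : 1 / x - 1 / (x + 1) = 1 / ((x + 1) * x) := by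
    field_simp
    ring
  rw [hsub]
  gcongr
  linarith

namespace Nhat

variable {V : Type*} [DecidableEq V] (G : SimpleGraph V) [DecidableRel G.Adj]
  {S : Finset V} {b y : V}

lemma eq_card_filter_not_adj (S : Finset V) (y : V) :
    Nhat G S y = #(S.filter fun y' => ¬ G.Adj y' y) := by
  unfold Nhat
  congr 1
  refine filter_congr fun y' _ => ⟨?_, Or.inr⟩
  rintro (rfl | h)
  exacts [G.irrefl, h]

lemma pos (hy : y ∈ S) : 0 < Nhat G S y := by
  rw [eq_card_filter_not_adj]
  exact card_pos.mpr ⟨y, mem_filter.mpr ⟨hy, G.irrefl⟩⟩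

lemma erase_of_adj (h : G.Adj b y) : Nhat G (S.erase b) y = Nhat G S y := by
  simp only [eq_card_filter_not_adj, filter_erase]
  rw [erase_eq_of_notMem (by simp [h])]

lemma erase_add_one (hb : b ∈ S) (h : ¬ G.Adj b y) :
    Nhat G (S.erase b) y + 1 = Nhat G S y := by
  simp only [eq_card_filter_not_adj, filter_erase]
  exact card_erase_add_one (mem_filter.mpr ⟨hb, h⟩)

lemma isClique_of_forall_le_one (h : ∀ y ∈ S, Nhat G S y ≤ 1) : G.IsClique (S : Set V) := by
  intro u hu v hv huv
  by_contra hadj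
  have hpair : ({u, v} : Finset V) ⊆ S.filter fun y' => ¬ G.Adj y' v := by
    intro x hx
    rcases mem_insert.mp hx with rfl | hx
    · exact mem_filter.mpr ⟨hu, hadj⟩
    · rw [mem_singleton.mp hx]
      exact mem_filter.mpr ⟨hv, G.irrefl⟩
  have hcard := card_le_card hpair
  rw [card_pair huv, ← eq_card_filter_not_adj] at hcard
  have := h v hv
  omega

lemma sum_inv_le_card (S : Finset V) : ∑ y ∈ S, 1 / (Nhat G S y : ℝ) ≤ #S := by
  rw [card_eq_sum_ones, Nat.cast_sum]
  exact sum_le_sum fun y _ => by simpa using Nat.cast_inv_le_one (Nhat G S y)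

lemma sum_inv_le_sum_inv_erase (hb : b ∈ S) (hmax : ∀ y ∈ S, Nhat G S y ≤ Nhat G S b)
    (h2 : 2 ≤ Nhat G S b) :
    ∑ y ∈ S, 1 / (Nhat G S y : ℝ) ≤ ∑ y ∈ S.erase b, 1 / (Nhat G (S.erase b) y : ℝ) := by
  set c := Nhat G (S.erase b) b
  have hcb : c + 1 = Nhat G S b := erase_add_one G hb G.irrefl
  have hc : (0 : ℝ) < c := by norm_cast; omega
  have hterm : ∀ y ∈ S.erase b,
      (if ¬ G.Adj y b then 1 / (((c : ℝ) + 1) * c) else 0) ≤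
        1 / (Nhat G (S.erase b) y : ℝ) - 1 / (Nhat G S y : ℝ) := by
    intro y hy
    split_ifs with hadj
    · rw [erase_of_adj G hadj.symm, sub_self]
    · have hdrop := erase_add_one G hb fun h : G.Adj b y => hadj h.symm
      have hle : Nhat G (S.erase b) y ≤ c := by have := hmax y (mem_of_mem_erase hy); omega
      rw [← hdrop, Nat.cast_add_one]
      exact one_div_mul_le_one_div_sub_one_div (by exact_mod_cast pos G hy) (by exact_mod_cast hle)
  have hgain : 1 / ((c : ℝ) + 1) ≤
      ∑ y ∈ S.erase b, (1 / (Nhat G (S.erase b) y : ℝ) - 1 / (Nhat G S y : ℝ)) := by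
    calc 1 / ((c : ℝ) + 1) = c * (1 / ((c + 1) * c)) := by field_simp
      _ = ∑ y ∈ S.erase b, if ¬ G.Adj y b then 1 / (((c : ℝ) + 1) * c) else 0 := by
        rw [← sum_filter, sum_const, nsmul_eq_mul, ← eq_card_filter_not_adj]
      _ ≤ _ := sum_le_sum hterm
  rw [← add_sum_erase S _ hb, ← hcb, Nat.cast_add_one]
  rw [sum_sub_distrib] at hgain
  linarith

end Nhat

lemma exists_isClique_sum_inv_Nhat_le_card {V : Type*} [DecidableEq V] (G : SimpleGraph V)
    [DecidableRel G.Adj] (S : Finset V) :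
    ∃ T : Finset V, G.IsClique (T : Set V) ∧ ∑ y ∈ S, 1 / (Nhat G S y : ℝ) ≤ #T := by
  induction S using Finset.strongInduction with
  | H S ih =>
  by_cases hle : ∀ y ∈ S, Nhat G S y ≤ 1
  · exact ⟨S, Nhat.isClique_of_forall_le_one G hle, Nhat.sum_inv_le_card G S⟩
  push Not at hle
  obtain ⟨u, hu, hu1⟩ := hle
  obtain ⟨b, hb, hmax⟩ := S.exists_max_image (Nhat G S) ⟨u, hu⟩
  obtain ⟨T, hT, hsum⟩ := ih (S.erase b) (erase_ssubset hb)
  exact ⟨T, hT, (Nhat.sum_inv_le_sum_inv_erase G hb hmax (hu1.trans_le (hmax u hu))).trans hsum⟩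

theorem stmt_6_general {V : Type*} [Fintype V] [DecidableEq V] (G : SimpleGraph V)
    [DecidableRel G.Adj] (k : ℕ) (S : Finset V) (hS : S.Nonempty)
    (hg : (k : ℝ) / (Fintype.card V : ℝ) ≤ g G S) :
    ∃ T : Finset V, G.IsClique (T : Set V) ∧ k ≤ T.card := by
  obtain ⟨T, hT, hsum⟩ := exists_isClique_sum_inv_Nhat_le_card G S
  have hV : (0 : ℝ) < Fintype.card V := by
    exact_mod_cast Fintype.card_pos_iff.mpr ⟨hS.choose⟩
  have hk : (k : ℝ) ≤ ∑ y ∈ S, 1 / (Nhat G S y : ℝ) := by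
    rwa [g, one_div_mul_eq_div, div_le_div_iff_of_pos_right hV] at hg
  exact ⟨T, hT, by exact_mod_cast hk.trans hsum⟩

/-- If some nonempty `S` satisfies `g S ≥ k / |V|` with `k ≥ 1`, then `G`
contains a clique of size at least `k`. -/
theorem stmt_6 {V : Type*} [Fintype V] [DecidableEq V] (G : SimpleGraph V)
    [DecidableRel G.Adj] (k : ℕ) (hk : 1 ≤ k) (S : Finset V) (hS : S.Nonempty)
    (hg : (k : ℝ) / (Fintype.card V : ℝ) ≤ g G S) :
    ∃ T : Finset V, G.IsClique (T : Set V) ∧ k ≤ T.card :=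
  stmt_6_general G k S hS hg
end

section
/- Let G = (V,E) be a finite simple graph, S ⊆ V nonempty with max_{y∈S} N̂_S(y) > 1 where N̂_S(y) = |{y' ∈ S : y' = y or (y',y) ∉ E}|, and let y* = argmax_{y∈S} N̂_S(y). Then Σ over y ∈ S\{y*} not adjacent to y* of 1/((N̂_S(y)−1)·N̂_S(y)) ≥ 1/N̂_S(y*). -/
open Finset

/-- Key inequality inside Lemma 1: if `y*` maximizes `N̂_S` and `N̂_S(y*) > 1`,
then `Σ_{y ∈ S \ {y*}, y not adjacent to y*} 1/((N̂_S(y)−1)·N̂_S(y)) ≥ 1/N̂_S(y*)`. -/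
theorem stmt_10 {V : Type*} [Fintype V] [DecidableEq V] (G : SimpleGraph V)
    [DecidableRel G.Adj] (S : Finset V) (hS : S.Nonempty)
    (ystar : V) (hy : ystar ∈ S) (hgt : 1 < Nhat G S ystar)
    (hmax : ∀ y ∈ S, Nhat G S y ≤ Nhat G S ystar) :
    (1 : ℝ) / (Nhat G S ystar : ℝ) ≤
      ∑ y ∈ (S.erase ystar).filter (fun y => ¬ G.Adj y ystar),
        1 / (((Nhat G S y : ℝ) - 1) * (Nhat G S y : ℝ)) := by
  classical
  set n := Nhat G S ystar with hn
  set T := (S.erase ystar).filter (fun y => ¬ G.Adj y ystar) with hT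
  -- the defining filter for Nhat ystar is insert ystar T
  have hset : S.filter (fun y' => y' = ystar ∨ ¬ G.Adj y' ystar) = insert ystar T := by
    ext x
    simp only [hT, mem_filter, mem_insert, mem_erase]
    constructor
    · rintro ⟨hxS, hx | hx⟩
      · exact Or.inl hx
      · by_cases hxe : x = ystar
        · exact Or.inl hxe
        · exact Or.inr ⟨⟨hxe, hxS⟩, hx⟩
    · rintro (rfl | ⟨⟨hne, hxS⟩, hx⟩)
      · exact ⟨hy, Or.inl rfl⟩
      · exact ⟨hxS, Or.inr hx⟩
  have hys_not : ystar ∉ T := by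
    simp [hT]
  have hcard : T.card = n - 1 := by
    have : n = T.card + 1 := by
      rw [hn, Nhat, hset, card_insert_of_notMem hys_not]
    omega
  -- each y ∈ T has 2 ≤ Nhat G S y
  have key : ∀ y ∈ T, 2 ≤ Nhat G S y := by
    intro y hyT
    simp only [hT, mem_filter, mem_erase] at hyT
    obtain ⟨⟨hne, hyS⟩, hadj⟩ := hyT
    have hsub : ({y, ystar} : Finset V) ⊆
        S.filter (fun y' => y' = y ∨ ¬ G.Adj y' y) := by
      intro x hx
      simp only [mem_insert, mem_singleton] at hx
      rcases hx with rfl | rfl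
      · exact mem_filter.2 ⟨hyS, Or.inl rfl⟩
      · exact mem_filter.2 ⟨hy, Or.inr fun h => hadj h.symm⟩
    have := card_le_card hsub
    rw [card_pair hne] at this
    exact this
  have hn2 : 2 ≤ n := hgt
  have hnpos : (0 : ℝ) < (n : ℝ) := by positivity
  have hn1pos : (0 : ℝ) < (n : ℝ) - 1 := by
    have : (2 : ℝ) ≤ (n : ℝ) := by exact_mod_cast hn2
    linarith
  -- lower bound each term by 1/((n-1)*n)
  have hterm : ∀ y ∈ T, 1 / (((n : ℝ) - 1) * (n : ℝ)) ≤
      1 / (((Nhat G S y : ℝ) - 1) * (Nhat G S y : ℝ)) := by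
    intro y hyT
    have hm2 : 2 ≤ Nhat G S y := key y hyT
    have hmn : Nhat G S y ≤ n := by
      apply hmax
      simp only [hT, mem_filter, mem_erase] at hyT
      exact hyT.1.2
    have hm2' : (2 : ℝ) ≤ (Nhat G S y : ℝ) := by exact_mod_cast hm2
    have hmn' : (Nhat G S y : ℝ) ≤ (n : ℝ) := by exact_mod_cast hmn
    apply one_div_le_one_div_of_le
    · nlinarith
    · nlinarith
  calc (1 : ℝ) / (n : ℝ)
      = (T.card : ℝ) * (1 / (((n : ℝ) - 1) * (n : ℝ))) := by
        have : (T.card : ℝ) = (n : ℝ) - 1 := by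
          rw [hcard]
          have : ((n - 1 : ℕ) : ℝ) = (n : ℝ) - 1 := by
            have : 1 ≤ n := le_of_lt hgt
            push_cast [Nat.cast_sub this]
            ring
          rw [this]
        rw [this]
        field_simp
    _ ≤ ∑ y ∈ T, 1 / (((Nhat G S y : ℝ) - 1) * (Nhat G S y : ℝ)) := by
        rw [← nsmul_eq_mul]
        exact Finset.card_nsmul_le_sum T _ _ hterm
end
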